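/- Fix k ≥ 1 and n ≥ 1, and for each multi-index (i_1,…,i_k) ∈ (Fin n)^k let θ_{i_1…i_k} : E → ℝ be a smooth function, the family being antisymmetric under permutations of the indices. Assume that for all indices i_1,…,i_{k+1} ∈ Fin n one has Σ_{a=1}^{k+1} (−1)^{a−1} ∂θ_{i_1…î_a…i_{k+1}}/∂y^{i_a} = 0 identically on E (the hat means the index is omitted). Then there exists a smooth antisymmetric family of functions ω_{j_1…j_{k−1}} : E → ℝ (a single function if k = 1) such that θ_{i_1…i_k} = Σ_{a=1}^{k} (−1)^{a−1} ∂ω_{i_1…î_a…i_k}/∂y^{i_a} on all of E. (This is the coordinate content of the Poincaré-type Lemma: a semi-basic k-form on J¹π that is d_J-closed modulo dt is locally d_J-exact modulo dt; on the model E the fibres in y are convex, so the primitive exists globally.) -/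

import Mathlib

/-!
The primitive is the fibrewise homotopy operator of the contraction `y ↦ s • y` of the fibres:
`ω_J = ∑ᵢ yⁱ ∫₀¹ s^(k-1) θ_{iJ}(t, x, s y) ds`.
Differentiating under the integral sign, `d_y ω` and the same operator applied to `d_y θ` add up
to `k ∫₀¹ s^(k-1) θ(t, x, s y) ds + ∫₀¹ s^k yⁱ ∂θ/∂yⁱ(t, x, s y) ds`, where antisymmetry of `θ`
produces the factor `k`. The integrand is `d/ds (s^k θ(t, x, s y))`, so the sum is `θ`; when
`d_y θ = 0` this says `θ = d_y ω`.
-/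

noncomputable section

/-- The local model `E = ℝ × (Fin n → ℝ) × (Fin n → ℝ)` of the first jet bundle `J¹π`,
with coordinates `(t, xⁱ, yⁱ)`. -/
abbrev E (n : ℕ) : Type := ℝ × (Fin n → ℝ) × (Fin n → ℝ)

/-- The coordinate vector `∂/∂yⁱ`. -/
def pdy {n : ℕ} (i : Fin n) : E n := (0, 0, Pi.single i 1)

open MeasureTheory

section ParametricIntegral

variable {H B : Type*} [NormedAddCommGroup H] [NormedSpace ℝ H]
  [NormedAddCommGroup B] [NormedSpace ℝ B] {F : ℝ × H → B}

theorem hasFDerivAt_intervalIntegral_of_contDiff [ProperSpace H] (hF : ContDiff ℝ 1 F) (a b : ℝ)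
    (x₀ : H) :
    HasFDerivAt (fun x => ∫ s in a..b, F (s, x))
      (∫ s in a..b, (fderiv ℝ F (s, x₀)).comp (.inr ℝ ℝ H)) x₀ := by
  have hF' : Continuous fun q => (fderiv ℝ F q).comp (.inr ℝ ℝ H) :=
    (hF.continuous_fderiv one_ne_zero).clm_comp continuous_const
  obtain ⟨C, hC⟩ := (isCompact_uIcc.prod (isCompact_closedBall x₀ 1)).exists_bound_of_continuousOn
    hF'.continuousOn
  refine intervalIntegral.hasFDerivAt_integral_of_dominated_of_fderiv_le (𝕜 := ℝ) (μ := volume)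
    (F := fun x s => F (s, x)) (F' := fun x s => (fderiv ℝ F (s, x)).comp (.inr ℝ ℝ H))
    (bound := fun _ => C) (Metric.ball_mem_nhds x₀ one_pos) (.of_forall fun x => ?_) ?_ ?_
    (.of_forall fun s hs x hx => ?_) intervalIntegrable_const (.of_forall fun s _ x _ => ?_)
  · exact (hF.continuous.comp (by fun_prop)).aestronglyMeasurable
  · exact (hF.continuous.comp (by fun_prop)).intervalIntegrable a b
  · exact (hF'.comp (by fun_prop)).aestronglyMeasurable
  · exact hC (s, x) ⟨Set.uIoc_subset_uIcc hs, Metric.ball_subset_closedBall hx⟩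
  · exact ((hF.differentiable one_ne_zero) (s, x)).hasFDerivAt.comp x
      (hasFDerivAt_prodMk_right s x)

theorem fderiv_intervalIntegral_apply_of_contDiff [ProperSpace H] (hF : ContDiff ℝ 1 F)
    (a b : ℝ) (x v : H) :
    fderiv ℝ (fun x => ∫ s in a..b, F (s, x)) x v = ∫ s in a..b, fderiv ℝ F (s, x) (0, v) := by
  have hF' : Continuous fun s : ℝ => (fderiv ℝ F (s, x)).comp (.inr ℝ ℝ H) :=
    ((hF.continuous_fderiv one_ne_zero).comp (by fun_prop)).clm_comp continuous_const
  rw [(hasFDerivAt_intervalIntegral_of_contDiff hF a b x).fderiv,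
    ContinuousLinearMap.intervalIntegral_apply (hF'.intervalIntegrable a b)]
  rfl

theorem contDiff_intervalIntegral_of_contDiff [FiniteDimensional ℝ H] {k : ℕ∞} (hF : ContDiff ℝ k F)
    (a b : ℝ) : ContDiff ℝ k fun x => ∫ s in a..b, F (s, x) := by
  suffices h : ∀ m : ℕ, ∀ G : ℝ × H → B, ContDiff ℝ m G →
      ContDiff ℝ m fun x => ∫ s in a..b, G (s, x) from
    contDiff_iff_forall_nat_le.2 fun m hm => h m F (hF.of_le (by exact_mod_cast hm))
  intro m
  induction m with
  | zero =>
    intro G hG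
    exact contDiff_zero.2 (intervalIntegral.continuous_parametric_intervalIntegral_of_continuous'
      (f := fun x s => G (s, x)) (hG.continuous.comp (by fun_prop)) a b)
  | succ m ih =>
    intro G hG
    push_cast at hG ⊢
    refine contDiff_succ_iff_fderiv_apply.2 ⟨fun x =>
      (hasFDerivAt_intervalIntegral_of_contDiff hG.one_of_succ a b x).differentiableAt,
      by simp, fun v => ?_⟩
    simp_rw [fderiv_intervalIntegral_apply_of_contDiff hG.one_of_succ]
    exact ih _ ((hG.fderiv_right le_rfl).clm_apply contDiff_const)

theorem fderiv_comp_prodMk_apply {s : ℝ} {x : H} (hF : DifferentiableAt ℝ F (s, x)) (v : H) :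
    fderiv ℝ (fun y => F (s, y)) x v = fderiv ℝ F (s, x) (0, v) := by
  have h : HasFDerivAt (fun y => F (s, y)) ((fderiv ℝ F (s, x)).comp (.inr ℝ ℝ H)) x :=
    hF.hasFDerivAt.comp x (hasFDerivAt_prodMk_right s x)
  rw [h.fderiv]
  rfl

end ParametricIntegral

variable {n : ℕ}

def fiberScale (n : ℕ) (s : ℝ) : E n →L[ℝ] E n :=
  (ContinuousLinearMap.id ℝ ℝ).prodMap
    ((ContinuousLinearMap.id ℝ (Fin n → ℝ)).prodMap (s • ContinuousLinearMap.id ℝ (Fin n → ℝ)))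

@[simp]
theorem fiberScale_apply (s : ℝ) (p : E n) : fiberScale n s p = (p.1, p.2.1, s • p.2.2) := rfl

theorem fiberScale_pdy (s : ℝ) (j : Fin n) : fiberScale n s (pdy j) = s • pdy j := by
  simp [pdy]

theorem sum_smul_pdy (y : Fin n → ℝ) : ∑ i, y i • pdy i = ((0 : ℝ), (0 : Fin n → ℝ), y) := by
  ext <;> simp [pdy, Prod.fst_sum, Prod.snd_sum, Finset.sum_apply, Pi.single_apply]

theorem contDiff_fiberScale_uncurry :
    ContDiff ℝ ⊤ fun q : ℝ × E n => fiberScale n q.1 q.2 := by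
  simp only [fiberScale_apply]; fun_prop

def radialIntegral (m : ℕ) (f : E n → ℝ) (p : E n) : ℝ :=
  ∫ s in (0 : ℝ)..1, s ^ m * f (fiberScale n s p)

variable {m : ℕ} {f g : E n → ℝ}

theorem intervalIntegrable_pow_mul_comp_fiberScale (hf : Continuous f) (p : E n) :
    IntervalIntegrable (fun s => s ^ m * f (fiberScale n s p)) volume 0 1 :=
  Continuous.intervalIntegrable (by simp only [fiberScale_apply]; fun_prop) 0 1

theorem radialIntegral_const_mul (c : ℝ) (p : E n) :
    radialIntegral m (fun q => c * f q) p = c * radialIntegral m f p := by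
  simp only [radialIntegral, ← intervalIntegral.integral_const_mul]
  congr 1; ext s; ring

theorem radialIntegral_sub (hf : Continuous f) (hg : Continuous g) (p : E n) :
    radialIntegral m (fun q => f q - g q) p = radialIntegral m f p - radialIntegral m g p := by
  simp only [radialIntegral, mul_sub]
  exact intervalIntegral.integral_sub (intervalIntegrable_pow_mul_comp_fiberScale hf p)
    (intervalIntegrable_pow_mul_comp_fiberScale hg p)

theorem radialIntegral_finset_sum {ι : Type*} (t : Finset ι) {f : ι → E n → ℝ}
    (hf : ∀ i ∈ t, Continuous (f i)) (p : E n) :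
    radialIntegral m (fun q => ∑ i ∈ t, f i q) p = ∑ i ∈ t, radialIntegral m (f i) p := by
  simp only [radialIntegral, Finset.mul_sum]
  exact intervalIntegral.integral_finsetSum fun i hi =>
    intervalIntegrable_pow_mul_comp_fiberScale (hf i hi) p

theorem ContDiff.radialIntegral {k : ℕ∞} (hf : ContDiff ℝ k f) :
    ContDiff ℝ k (radialIntegral m f) :=
  contDiff_intervalIntegral_of_contDiff
    ((contDiff_fst.pow m).mul (hf.comp (contDiff_fiberScale_uncurry.of_le le_top))) 0 1

theorem fderiv_radialIntegral_pdy (hf : ContDiff ℝ 1 f) (p : E n) (j : Fin n) :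
    fderiv ℝ (radialIntegral m f) p (pdy j)
      = radialIntegral (m + 1) (fun q => fderiv ℝ f q (pdy j)) p := by
  have hF : ContDiff ℝ 1 fun q : ℝ × E n => q.1 ^ m * f (fiberScale n q.1 q.2) :=
    (contDiff_fst.pow m).mul (hf.comp (contDiff_fiberScale_uncurry.of_le le_top))
  unfold radialIntegral
  rw [fderiv_intervalIntegral_apply_of_contDiff hF]
  congr 1; ext s
  rw [← fderiv_comp_prodMk_apply (hF.differentiable one_ne_zero _)]
  have hfs : HasFDerivAt (fun q => s ^ m * f (fiberScale n s q))
      (s ^ m • (fderiv ℝ f (fiberScale n s p)).comp (fiberScale n s)) p :=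
    (((hf.differentiable one_ne_zero) _).hasFDerivAt.comp p
      (fiberScale n s).hasFDerivAt).const_mul (s ^ m)
  simp only [hfs.fderiv, FunLike.coe_smul, ContinuousLinearMap.coe_comp,
    Pi.smul_apply, Function.comp_apply, fiberScale_pdy, map_smul, smul_eq_mul]
  ring

theorem hasDerivAt_pow_mul_comp_fiberScale (hf : ContDiff ℝ 1 f) (p : E n) (s : ℝ) :
    HasDerivAt (fun s => s ^ (m + 1) * f (fiberScale n s p))
      ((m + 1) * s ^ m * f (fiberScale n s p)
        + s ^ (m + 1) * fderiv ℝ f (fiberScale n s p) ((0 : ℝ), (0 : Fin n → ℝ), p.2.2)) s := by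
  have hline : HasDerivAt (fun s => fiberScale n s p) ((0 : ℝ), (0 : Fin n → ℝ), p.2.2) s := by
    simp only [fiberScale_apply]
    exact (hasDerivAt_const s p.1).prodMk
      ((hasDerivAt_const s p.2.1).prodMk (by simpa using (hasDerivAt_id s).smul_const p.2.2))
  refine ((hasDerivAt_pow (m + 1) s).mul
    (((hf.differentiable one_ne_zero) _).hasFDerivAt.comp_hasDerivAt s hline)).congr_deriv ?_
  simp only [Nat.add_sub_cancel, Function.comp_apply]
  push_cast
  ring

theorem radialIntegral_euler (hf : ContDiff ℝ 1 f) (p : E n) :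
    (m + 1) * radialIntegral m f p
      + ∑ i, p.2.2 i * radialIntegral (m + 1) (fun q => fderiv ℝ f q (pdy i)) p = f p := by
  have hDf := hf.continuous_fderiv one_ne_zero
  have hsum : ∀ q, ∑ i, p.2.2 i * fderiv ℝ f q (pdy i)
      = fderiv ℝ f q ((0 : ℝ), (0 : Fin n → ℝ), p.2.2) := fun q => by
    simp [← sum_smul_pdy, map_sum]
  calc (m + 1) * radialIntegral m f p
        + ∑ i, p.2.2 i * radialIntegral (m + 1) (fun q => fderiv ℝ f q (pdy i)) p
      = radialIntegral m (fun q => (m + 1) * f q) p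
        + radialIntegral (m + 1) (fun q => ∑ i, p.2.2 i * fderiv ℝ f q (pdy i)) p := by
        simp only [← radialIntegral_const_mul]
        rw [← radialIntegral_finset_sum]
        exact fun i _ => by fun_prop
    _ = ∫ s in (0 : ℝ)..1, ((m + 1) * s ^ m * f (fiberScale n s p)
        + s ^ (m + 1) * fderiv ℝ f (fiberScale n s p) ((0 : ℝ), (0 : Fin n → ℝ), p.2.2)) := by
        rw [radialIntegral, radialIntegral, ← intervalIntegral.integral_add]
        · simp only [hsum]
          congr 1; ext s; ring
        · exact intervalIntegrable_pow_mul_comp_fiberScale (f := fun q => (m + 1) * f q)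
            (by fun_prop) p
        · exact intervalIntegrable_pow_mul_comp_fiberScale
            (f := fun q => ∑ i, p.2.2 i * fderiv ℝ f q (pdy i)) (by fun_prop) p
    _ = f p := by
        rw [intervalIntegral.integral_eq_sub_of_hasDerivAt
          (fun s _ => hasDerivAt_pow_mul_comp_fiberScale hf p s)
          (Continuous.intervalIntegrable (by simp only [fiberScale_apply]; fun_prop) 0 1)]
        simp

theorem fderiv_fiberCoord_pdy (p : E n) (i j : Fin n) :
    fderiv ℝ (fun q : E n => q.2.2 i) p (pdy j) = (Pi.single j (1 : ℝ) : Fin n → ℝ) i := by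
  let L : E n →L[ℝ] ℝ := (ContinuousLinearMap.proj i).comp
    ((ContinuousLinearMap.snd ℝ _ _).comp (ContinuousLinearMap.snd ℝ ℝ _))
  rw [show (fun q : E n => q.2.2 i) = L from rfl, L.fderiv]
  rfl

variable {k : ℕ}

def IsAntisymmFamily (θ : (Fin k → Fin n) → E n → ℝ) : Prop :=
  ∀ (σ : Equiv.Perm (Fin k)) (I : Fin k → Fin n) (p : E n),
    θ (I ∘ σ) p = ((Equiv.Perm.sign σ : ℤ) : ℝ) * θ I p

-- `d_J` modulo `dt` on semi-basic forms, in coordinates; `a` is 0-based, whence `(-1) ^ a`.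
def fiberDiff (θ : (Fin k → Fin n) → E n → ℝ) (I : Fin (k + 1) → Fin n)
    (p : E n) : ℝ :=
  ∑ a : Fin (k + 1), (-1 : ℝ) ^ (a : ℕ) * fderiv ℝ (θ fun b => I (a.succAbove b)) p (pdy (I a))

def fiberHomotopy (θ : (Fin (k + 1) → Fin n) → E n → ℝ) (J : Fin k → Fin n)
    (p : E n) : ℝ :=
  ∑ i, p.2.2 i * radialIntegral k (θ (Fin.cons i J)) p

theorem ContDiff.fiberHomotopy {r : ℕ∞} {θ : (Fin (k + 1) → Fin n) → E n → ℝ}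
    (hθ : ∀ I, ContDiff ℝ r (θ I)) (J : Fin k → Fin n) :
    ContDiff ℝ r (fiberHomotopy θ J) :=
  ContDiff.sum fun i _ => (contDiff_apply ℝ ℝ i |>.comp (contDiff_snd.comp contDiff_snd)).mul
    (hθ _).radialIntegral

theorem IsAntisymmFamily.apply_cons_succAbove {θ : (Fin (k + 1) → Fin n) → E n → ℝ}
    (hθ : IsAntisymmFamily θ) (I : Fin (k + 1) → Fin n) (a : Fin (k + 1)) (p : E n) :
    θ (Fin.cons (I a) fun b => I (a.succAbove b)) p = (-1) ^ (a : ℕ) * θ I p := by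
  -- `cycleRange a` is an `(a + 1)`-cycle, of sign `(-1) ^ a`.
  have hI : I ∘ ⇑(a.cycleRange)⁻¹ = Fin.cons (I a) fun b => I (a.succAbove b) := by
    funext b
    induction b using Fin.cases with
    | zero => simp [Equiv.Perm.inv_def, Fin.cycleRange_symm_zero]
    | succ c => simp [Equiv.Perm.inv_def, Fin.cycleRange_symm_succ]
  rw [← hI, hθ, Equiv.Perm.sign_inv, Fin.sign_cycleRange]
  simp

theorem IsAntisymmFamily.fiberHomotopy {θ : (Fin (k + 1) → Fin n) → E n → ℝ}
    (hθ : IsAntisymmFamily θ) : IsAntisymmFamily (fiberHomotopy θ) := by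
  intro σ J p
  -- `σ'` fixes the front index and permutes the others by `σ`.
  set σ' : Equiv.Perm (Fin (k + 1)) := Equiv.Perm.decomposeFin.symm (0, σ)
  have hcons : ∀ i : Fin n, Fin.cons i (J ∘ σ) = (Fin.cons i J : Fin (k + 1) → Fin n) ∘ σ' := by
    intro i; funext b
    induction b using Fin.cases with
    | zero => simp [σ']
    | succ c => simp [σ', Equiv.Perm.decomposeFin_symm_apply_succ]
  have hsign : Equiv.Perm.sign σ' = Equiv.Perm.sign σ := by
    simp [σ', Equiv.Perm.decomposeFin.symm_sign]
  have hθσ : ∀ i, θ (Fin.cons i (J ∘ σ)) = fun q => (Equiv.Perm.sign σ : ℝ) * θ (Fin.cons i J) q :=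
    fun i => funext fun q => by rw [hcons, hθ, hsign]
  simp only [_root_.fiberHomotopy, hθσ, radialIntegral_const_mul, Finset.mul_sum]
  congr 1; ext i; ring

theorem fiberDiff_cons (θ : (Fin (k + 1) → Fin n) → E n → ℝ) (i : Fin n)
    (I : Fin (k + 1) → Fin n) (p : E n) :
    fiberDiff θ (Fin.cons i I) p = fderiv ℝ (θ I) p (pdy i)
      - ∑ a : Fin (k + 1), (-1 : ℝ) ^ (a : ℕ) *
          fderiv ℝ (θ (Fin.cons i fun b => I (a.succAbove b))) p (pdy (I a)) := by
  have hsucc : ∀ a : Fin (k + 1), (fun b => (Fin.cons i I : Fin (k + 2) → Fin n)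
      (a.succ.succAbove b)) = Fin.cons i fun b => I (a.succAbove b) := by
    intro a; funext b
    induction b using Fin.cases with
    | zero => simp
    | succ c => simp [Fin.succ_succAbove_succ]
  rw [fiberDiff, Fin.sum_univ_succ]
  simp only [Fin.cons_zero, Fin.zero_succAbove, Fin.cons_succ, Fin.val_zero, pow_zero, one_mul,
    Fin.val_succ, pow_succ, hsucc]
  simp only [mul_neg_one, neg_mul, Finset.sum_neg_distrib, sub_eq_add_neg]

theorem fderiv_fiberHomotopy_pdy {θ : (Fin (k + 1) → Fin n) → E n → ℝ}
    (hθ : ∀ I, ContDiff ℝ 1 (θ I)) (J : Fin k → Fin n) (p : E n) (j : Fin n) :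
    fderiv ℝ (fiberHomotopy θ J) p (pdy j) = radialIntegral k (θ (Fin.cons j J)) p
      + ∑ i, p.2.2 i *
          radialIntegral (k + 1) (fun q => fderiv ℝ (θ (Fin.cons i J)) q (pdy j)) p := by
  have hR : ∀ i, DifferentiableAt ℝ (radialIntegral k (θ (Fin.cons i J))) p := fun i =>
    ((hθ _).radialIntegral.differentiable one_ne_zero) p
  have hy : ∀ i, DifferentiableAt ℝ (fun q : E n => q.2.2 i) p := fun i => by fun_prop
  unfold fiberHomotopy
  rw [fderiv_fun_sum (A := fun i q => q.2.2 i * radialIntegral k (θ (Fin.cons i J)) q)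
    fun i _ => (hy i).mul (hR i)]
  simp [fderiv_fun_mul (hy _) (hR _), fderiv_fiberCoord_pdy, fderiv_radialIntegral_pdy (hθ _),
    Pi.single_apply, Finset.sum_add_distrib, add_comm]

theorem fiberDiff_fiberHomotopy_add_fiberHomotopy_fiberDiff {θ : (Fin (k + 1) → Fin n) → E n → ℝ}
    (hθ : ∀ I, ContDiff ℝ 1 (θ I)) (hanti : IsAntisymmFamily θ) (I : Fin (k + 1) → Fin n)
    (p : E n) : fiberDiff (fiberHomotopy θ) I p + fiberHomotopy (fiberDiff θ) I p = θ I p := by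
  have hrot : ∑ a : Fin (k + 1), (-1 : ℝ) ^ (a : ℕ) *
      radialIntegral k (θ (Fin.cons (I a) fun b => I (a.succAbove b))) p
        = (k + 1) * radialIntegral k (θ I) p := by
    have h : ∀ a : Fin (k + 1), θ (Fin.cons (I a) fun b => I (a.succAbove b))
        = fun q => (-1) ^ (a : ℕ) * θ I q := fun a => funext (hanti.apply_cons_succAbove I a)
    simp [h, radialIntegral_const_mul, ← mul_assoc, ← pow_add]
  have hD : ∀ J v, Continuous fun q => fderiv ℝ (θ J) q v := fun J v =>
    ((hθ J).continuous_fderiv one_ne_zero).clm_apply continuous_const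
  have hcons : ∀ i, radialIntegral (k + 1) (fiberDiff θ (Fin.cons i I)) p
      = radialIntegral (k + 1) (fun q => fderiv ℝ (θ I) q (pdy i)) p
        - ∑ a : Fin (k + 1), (-1 : ℝ) ^ (a : ℕ) * radialIntegral (k + 1)
            (fun q => fderiv ℝ (θ (Fin.cons i fun b => I (a.succAbove b))) q (pdy (I a))) p := by
    intro i
    rw [funext (fiberDiff_cons θ i I), radialIntegral_sub, radialIntegral_finset_sum]
    · simp only [radialIntegral_const_mul]
    · exact fun a _ => continuous_const.mul (hD _ _)
    · exact hD _ _
    · exact continuous_finsetSum _ fun a _ => continuous_const.mul (hD _ _)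
  rw [fiberDiff, fiberHomotopy]
  simp only [fderiv_fiberHomotopy_pdy hθ, hcons, mul_add, Finset.sum_add_distrib, hrot,
    mul_sub, Finset.sum_sub_distrib, Finset.mul_sum]
  -- the terms `∂θ_{i, I∖a}/∂y^{I a}` cancel between the two halves
  rw [Finset.sum_comm]
  simp only [mul_left_comm ((-1 : ℝ) ^ _)]
  linear_combination radialIntegral_euler (hθ I) p

theorem fiberHomotopy_zero :
    fiberHomotopy (0 : (Fin (k + 1) → Fin n) → E n → ℝ) = 0 := by
  ext J p
  simp [fiberHomotopy, radialIntegral]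

theorem stmt1_general (n m : ℕ)
    (θ : (Fin (m + 1) → Fin n) → E n → ℝ)
    (hθsmooth : ∀ I, ContDiff ℝ (⊤ : ℕ∞) (θ I))
    (hθanti : ∀ (σ : Equiv.Perm (Fin (m + 1))) (I : Fin (m + 1) → Fin n) (p : E n),
      θ (I ∘ σ) p = ((Equiv.Perm.sign σ : ℤ) : ℝ) * θ I p)
    (hclosed : ∀ (I : Fin (m + 2) → Fin n) (p : E n),
      ∑ a : Fin (m + 2),
        (-1 : ℝ) ^ (a : ℕ) * fderiv ℝ (θ fun b => I (a.succAbove b)) p (pdy (I a)) = 0) :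
    ∃ ω : (Fin m → Fin n) → E n → ℝ,
      (∀ I, ContDiff ℝ (⊤ : ℕ∞) (ω I)) ∧
      (∀ (σ : Equiv.Perm (Fin m)) (I : Fin m → Fin n) (p : E n),
        ω (I ∘ σ) p = ((Equiv.Perm.sign σ : ℤ) : ℝ) * ω I p) ∧
      (∀ (I : Fin (m + 1) → Fin n) (p : E n),
        θ I p = ∑ a : Fin (m + 1),
          (-1 : ℝ) ^ (a : ℕ) * fderiv ℝ (ω fun b => I (a.succAbove b)) p (pdy (I a))) := by
  have hθclosed : fiberDiff θ = 0 := funext fun I => funext (hclosed I)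
  refine ⟨fiberHomotopy θ, ContDiff.fiberHomotopy hθsmooth,
    IsAntisymmFamily.fiberHomotopy hθanti, fun I p => ?_⟩
  have h := fiberDiff_fiberHomotopy_add_fiberHomotopy_fiberDiff
    (fun I => (hθsmooth I).of_le (by simp)) hθanti I p
  rw [hθclosed, fiberHomotopy_zero, Pi.zero_apply, Pi.zero_apply, add_zero] at h
  exact h.symm

/-- **Poincaré-type lemma, coordinate form.**  Let `k = m+1 ≥ 1`,
`n ≥ 1` and let `θ_{i₁…i_k} : E → ℝ` be a smooth family, antisymmetric in its
indices, such that `Σ_{a} (−1)^{a−1} ∂θ_{i₁…î_a…i_{k+1}}/∂y^{i_a} = 0` on `E`.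
Then there is a smooth antisymmetric family `ω_{j₁…j_{k−1}}` with
`θ_{i₁…i_k} = Σ_a (−1)^{a−1} ∂ω_{i₁…î_a…i_k}/∂y^{i_a}` on all of `E`. -/
theorem stmt1 (n m : ℕ) (hn : 1 ≤ n)
    (θ : (Fin (m + 1) → Fin n) → E n → ℝ)
    (hθsmooth : ∀ I, ContDiff ℝ (⊤ : ℕ∞) (θ I))
    (hθanti : ∀ (σ : Equiv.Perm (Fin (m + 1))) (I : Fin (m + 1) → Fin n) (p : E n),
      θ (I ∘ σ) p = ((Equiv.Perm.sign σ : ℤ) : ℝ) * θ I p)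
    (hclosed : ∀ (I : Fin (m + 2) → Fin n) (p : E n),
      ∑ a : Fin (m + 2),
        (-1 : ℝ) ^ (a : ℕ) * fderiv ℝ (θ fun b => I (a.succAbove b)) p (pdy (I a)) = 0) :
    ∃ ω : (Fin m → Fin n) → E n → ℝ,
      (∀ I, ContDiff ℝ (⊤ : ℕ∞) (ω I)) ∧
      (∀ (σ : Equiv.Perm (Fin m)) (I : Fin m → Fin n) (p : E n),
        ω (I ∘ σ) p = ((Equiv.Perm.sign σ : ℤ) : ℝ) * ω I p) ∧
      (∀ (I : Fin (m + 1) → Fin n) (p : E n),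
        θ I p = ∑ a : Fin (m + 1),
          (-1 : ℝ) ^ (a : ℕ) * fderiv ℝ (ω fun b => I (a.succAbove b)) p (pdy (I a))) :=
  stmt1_general n m θ hθsmooth hθanti hclosed
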